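/- As operators on F[t,t^{-1}], for every i ≥ 5: (i+1)i(i−1)(i−2)(i−3)(i−4)·(d/dt)^{i−4} = 10[t^3 d/dt,[t^3 d/dt,(d/dt)^i]] − 6(i−4)[t^5 d/dt,(d/dt)^i] − 15[t^2 d/dt,[t^4 d/dt,(d/dt)^i]]. -/
import Mathlib


/- Operators on F[t,t⁻¹] modelled on ℤ →₀ F (basis element k ↔ t^k). -/

noncomputable section
variable (F : Type*) [Field F] [CharZero F]

/-- Multiplication by `t^i`. -/
def Tpow (i : ℤ) : Module.End F (ℤ →₀ F) :=
  Finsupp.lsum F fun k => Finsupp.lsingle (k + i)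

/-- The degree operator `D = t · d/dt`. -/
def Dop : Module.End F (ℤ →₀ F) :=
  Finsupp.lsum F fun k => (k : F) • Finsupp.lsingle k

/-- The derivative `d/dt`, with `d/dt (t^k) = k t^{k-1}`. -/
def ddt : Module.End F (ℤ →₀ F) :=
  Finsupp.lsum F fun k => (k : F) • Finsupp.lsingle (k - 1)

/-- The commutator of operators. -/
def br (A B : Module.End F (ℤ →₀ F)) : Module.End F (ℤ →₀ F) := A * B - B * A

lemma ddt_single (k : ℤ) (c : F) :
    ddt F (Finsupp.single k c) = (k : F) • Finsupp.single (k - 1) c := by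
  rw [ddt, Finsupp.lsum_single, LinearMap.smul_apply, Finsupp.lsingle_apply]

lemma Tpow_single (a k : ℤ) (c : F) :
    Tpow F a (Finsupp.single k c) = Finsupp.single (k + a) c := by
  rw [Tpow, Finsupp.lsum_single, Finsupp.lsingle_apply]

lemma E_single (a k : ℤ) (c : F) :
    (Tpow F a * ddt F) (Finsupp.single k c) = (k : F) • Finsupp.single (k + a - 1) c := by
  rw [Module.End.mul_apply, ddt_single, map_smul, Tpow_single]
  congr 2
  omega

lemma ddt_pow_single (i : ℕ) (k : ℤ) (c : F) :
    (ddt F ^ i) (Finsupp.single k c)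
      = (∏ j ∈ Finset.range i, ((k : F) - j)) • Finsupp.single (k - i) c := by
  induction i generalizing k with
  | zero => simp
  | succ n ih =>
    rw [pow_succ, Module.End.mul_apply, ddt_single, map_smul, ih, smul_smul,
        Finset.prod_range_succ']
    congr 1
    · push_cast
      rw [mul_comm, sub_zero]
      congr 1
      refine Finset.prod_congr rfl fun j _ => ?_
      push_cast
      ring
    · congr 1
      omega

lemma br_single (a : ℤ) (i : ℕ) (k : ℤ) :
    br F (Tpow F a * ddt F) (ddt F ^ i) (Finsupp.single k (1 : F))
      = ((∏ j ∈ Finset.range i, ((k : F) - j)) * ((k : F) - i)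
          - (k : F) * ∏ j ∈ Finset.range i, ((k : F) + a - 1 - j))
        • Finsupp.single (k + a - 1 - i) 1 := by
  have h1 : k - i + a - 1 = k + a - 1 - i := by ring
  simp only [br, LinearMap.sub_apply, Module.End.mul_apply, ddt_pow_single, map_smul,
    ddt_single, Tpow_single, smul_smul]
  rw [show k - 1 + a - i = k + a - 1 - i by ring,
      show k - i - 1 + a = k + a - 1 - i by ring, ← sub_smul]
  congr 1
  push_cast
  ring_nf

/-- Falling-factorial product. -/
def fp (n : ℕ) (x : F) : F := ∏ j ∈ Finset.range n, (x - j)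

lemma fp_succ (n : ℕ) (x : F) : fp F (n + 1) x = fp F n x * (x - n) :=
  Finset.prod_range_succ _ _

lemma fp_shift (n : ℕ) (x : F) : fp F (n + 1) (x + 1) = (x + 1) * fp F n x := by
  rw [fp, Finset.prod_range_succ', mul_comm]
  push_cast
  rw [sub_zero]
  congr 1
  refine Finset.prod_congr rfl fun j _ => ?_
  push_cast
  ring

lemma key (m : ℕ) (x : F) :
    (((m : F) + 6) * ((m : F) + 5) * ((m : F) + 4) * ((m : F) + 3) * ((m : F) + 2) * ((m : F) + 1))
        * fp F (m + 1) x
    = 10 * ((fp F (m + 5) x * (x - ((m : F) + 5)) - x * fp F (m + 5) (x + 2)) * (x + 2 - ((m : F) + 5))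
            - x * (fp F (m + 5) (x + 2) * (x + 2 - ((m : F) + 5)) - (x + 2) * fp F (m + 5) (x + 4)))
      - 6 * ((m : F) + 1) * (fp F (m + 5) x * (x - ((m : F) + 5)) - x * fp F (m + 5) (x + 4))
      - 15 * ((fp F (m + 5) x * (x - ((m : F) + 5)) - x * fp F (m + 5) (x + 3)) * (x + 3 - ((m : F) + 5))
              - x * (fp F (m + 5) (x + 1) * (x + 1 - ((m : F) + 5)) - (x + 1) * fp F (m + 5) (x + 4))) := by
  have h0 : fp F (m + 5) x
      = fp F (m + 1) x * (x - ((m : F) + 1)) * (x - ((m : F) + 2)) * (x - ((m : F) + 3))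
          * (x - ((m : F) + 4)) := by
    rw [show m + 5 = m + 1 + 1 + 1 + 1 + 1 from rfl, fp_succ, fp_succ, fp_succ, fp_succ]
    push_cast
    ring
  have h1 : fp F (m + 5) (x + 1)
      = (x + 1) * (fp F (m + 1) x * (x - ((m : F) + 1)) * (x - ((m : F) + 2)) * (x - ((m : F) + 3))) := by
    rw [show m + 5 = m + 4 + 1 from rfl, fp_shift,
        show m + 4 = m + 1 + 1 + 1 + 1 from rfl, fp_succ, fp_succ, fp_succ]
    push_cast
    ring
  have h2 : fp F (m + 5) (x + 2)
      = (x + 2) * (x + 1) * (fp F (m + 1) x * (x - ((m : F) + 1)) * (x - ((m : F) + 2))) := by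
    rw [show m + 5 = m + 4 + 1 from rfl, show x + 2 = x + 1 + 1 by ring, fp_shift,
        show m + 4 = m + 3 + 1 from rfl, fp_shift,
        show m + 3 = m + 1 + 1 + 1 from rfl, fp_succ, fp_succ]
    push_cast
    ring
  have h3 : fp F (m + 5) (x + 3)
      = (x + 3) * (x + 2) * (x + 1) * (fp F (m + 1) x * (x - ((m : F) + 1))) := by
    rw [show m + 5 = m + 4 + 1 from rfl, show x + 3 = x + 2 + 1 by ring, fp_shift,
        show m + 4 = m + 3 + 1 from rfl, show x + 2 = x + 1 + 1 by ring, fp_shift,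
        show m + 3 = m + 2 + 1 from rfl, fp_shift,
        show m + 2 = m + 1 + 1 from rfl, fp_succ]
    push_cast
    ring
  have h4 : fp F (m + 5) (x + 4)
      = (x + 4) * (x + 3) * (x + 2) * (x + 1) * fp F (m + 1) x := by
    rw [show m + 5 = m + 4 + 1 from rfl, show x + 4 = x + 3 + 1 by ring, fp_shift,
        show m + 4 = m + 3 + 1 from rfl, show x + 3 = x + 2 + 1 by ring, fp_shift,
        show m + 3 = m + 2 + 1 from rfl, show x + 2 = x + 1 + 1 by ring, fp_shift,
        show m + 2 = m + 1 + 1 from rfl, fp_shift]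
    ring
  rw [h0, h1, h2, h3, h4]
  ring

lemma br_single' (a : ℤ) (i : ℕ) (k : ℤ) :
    br F (Tpow F a * ddt F) (ddt F ^ i) (Finsupp.single k (1 : F))
      = (fp F i (k : F) * ((k : F) - i) - (k : F) * fp F i ((k : F) + a - 1))
        • Finsupp.single (k + a - 1 - i) 1 := by
  rw [br_single]
  rfl

lemma br2_single (a b : ℤ) (i : ℕ) (k : ℤ) :
    br F (Tpow F b * ddt F) (br F (Tpow F a * ddt F) (ddt F ^ i)) (Finsupp.single k (1 : F))
      = ((fp F i (k : F) * ((k : F) - i) - (k : F) * fp F i ((k : F) + a - 1))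
            * ((k : F) + a - 1 - i)
          - (k : F) * (fp F i ((k : F) + b - 1) * ((k : F) + b - 1 - i)
              - ((k : F) + b - 1) * fp F i ((k : F) + b - 1 + a - 1)))
        • Finsupp.single (k + a + b - 2 - i) 1 := by
  rw [br, LinearMap.sub_apply,
      Module.End.mul_apply (f := Tpow F b * ddt F) (g := br F (Tpow F a * ddt F) (ddt F ^ i)),
      br_single', map_smul, E_single,
      Module.End.mul_apply (f := br F (Tpow F a * ddt F) (ddt F ^ i)) (g := Tpow F b * ddt F),
      E_single, map_smul, br_single', smul_smul, smul_smul,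
      show k + a - 1 - i + b - 1 = k + a + b - 2 - i by ring,
      show k + b - 1 + a - 1 - i = k + a + b - 2 - i by ring, ← sub_smul]
  congr 1
  simp only [fp]
  push_cast
  ring_nf

/-- For every `i ≥ 5`:
`(i+1)i(i−1)(i−2)(i−3)(i−4)(d/dt)^{i−4} = 10[t³d/dt,[t³d/dt,(d/dt)^i]]
   − 6(i−4)[t⁵d/dt,(d/dt)^i] − 15[t²d/dt,[t⁴d/dt,(d/dt)^i]]`. -/
theorem bracket_identity_three (i : ℕ) (hi : 5 ≤ i) :
    (((i : F) + 1) * (i : F) * ((i : F) - 1) * ((i : F) - 2) * ((i : F) - 3) * ((i : F) - 4)) •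
        ddt F ^ (i - 4)
    = (10 : F) • br F (Tpow F 3 * ddt F) (br F (Tpow F 3 * ddt F) (ddt F ^ i))
      - (6 * ((i : F) - 4)) • br F (Tpow F 5 * ddt F) (ddt F ^ i)
      - (15 : F) • br F (Tpow F 2 * ddt F) (br F (Tpow F 4 * ddt F) (ddt F ^ i)) := by
  obtain ⟨m, rfl⟩ : ∃ m, i = m + 5 := ⟨i - 5, by omega⟩
  refine Finsupp.lhom_ext fun k b => ?_
  rw [show Finsupp.single k b = b • Finsupp.single k (1 : F) by
        rw [Finsupp.smul_single, smul_eq_mul, mul_one],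
      map_smul, map_smul]
  congr 1
  rw [LinearMap.smul_apply, LinearMap.sub_apply, LinearMap.sub_apply,
      LinearMap.smul_apply, LinearMap.smul_apply, LinearMap.smul_apply,
      show m + 5 - 4 = m + 1 from rfl, ddt_pow_single,
      br2_single, br_single', br2_single,
      smul_smul, smul_smul, smul_smul, smul_smul]
  rw [show k + 3 + 3 - 2 - ((m + 5 : ℕ) : ℤ) = k - ((m + 1 : ℕ) : ℤ) by push_cast; ring,
      show k + 5 - 1 - ((m + 5 : ℕ) : ℤ) = k - ((m + 1 : ℕ) : ℤ) by push_cast; ring,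
      show k + 4 + 2 - 2 - ((m + 5 : ℕ) : ℤ) = k - ((m + 1 : ℕ) : ℤ) by push_cast; ring,
      ← sub_smul, ← sub_smul]
  congr 1
  have hk := key F m (k : F)
  simp only [fp] at hk ⊢
  push_cast at hk ⊢
  ring_nf at hk ⊢
  linear_combination hk
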